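/- arXiv:1505.01901 — 2 statements merged into one kernel-verified Lean document; each statement's English description precedes it below -/
import Mathlib

section
/- For every set A ⊆ ℕ, the partial computability bound α(A) is at most the coarse computability bound γ(A). In particular, if A is generically computable then γ(A) = 1. -/
open Filter Topology
open scoped symmDiff Classical

/-- ρ_n(A): the density of A below n. -/
noncomputable def partialDensity (A : Set ℕ) (n : ℕ) : ℝ :=
  ((Finset.range n).filter (fun k => k ∈ A)).card / n

/-- Lower density ρ̲(A). -/
noncomputable def lowerDensity (A : Set ℕ) : ℝ := liminf (partialDensity A) atTop

/-- Upper density ρ̄(A). -/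
noncomputable def upperDensity (A : Set ℕ) : ℝ := limsup (partialDensity A) atTop

/-- A has density r. -/
def HasDensity (A : Set ℕ) (r : ℝ) : Prop := Tendsto (partialDensity A) atTop (𝓝 r)

/-- A set of naturals is computable. -/
def IsComputableSet (A : Set ℕ) : Prop := ComputablePred (· ∈ A)

/-- A is coarsely computable at density r. -/
def CoarselyComputableAt (A : Set ℕ) (r : ℝ) : Prop :=
  ∃ C : Set ℕ, IsComputableSet C ∧ r ≤ lowerDensity {n | n ∈ A ↔ n ∈ C}

/-- γ(A), the coarse computability bound. -/
noncomputable def gammaBound (A : Set ℕ) : ℝ := sSup {r | CoarselyComputableAt A r}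

/-- A is partially computable at density r. -/
def PartiallyComputableAt (A : Set ℕ) (r : ℝ) : Prop :=
  ∃ φ : ℕ →. Bool, Partrec φ ∧ (∀ n b, b ∈ φ n → (b = true ↔ n ∈ A)) ∧
    r ≤ lowerDensity φ.Dom

/-- α(A), the partial computability bound. -/
noncomputable def alphaBound (A : Set ℕ) : ℝ := sSup {r | PartiallyComputableAt A r}

/-- A is generically computable. -/
def GenericallyComputable (A : Set ℕ) : Prop := PartiallyComputableAt A 1

/-- A is coarsely computable. -/
def CoarselyComputable (A : Set ℕ) : Prop :=
  ∃ C : Set ℕ, IsComputableSet C ∧ HasDensity (A ∆ C) 0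

/-! If a partial computable `φ` is correct for `A` on its domain `D`, then `D` is c.e., and a c.e.
set has computable subsets of almost the same lower density (Downey–Jockusch–Schupp): enumerate
`D` in stages, fix a computable threshold slightly below the density of `D`, let `u m` be the
first stage at which the enumeration meets the threshold at every `m' ≤ m`, and admit `k` to `S`
iff it is enumerated by stage `u (K * (k + 1))`. Below `n` this misses at most the `n / K`
elements under `n / K`. On a computable `S ⊆ D` the function `φ` is total, so it yields a
computable set that agrees with `A` on `S`. -/

lemma partialDensity_nonneg (A : Set ℕ) (n : ℕ) : 0 ≤ partialDensity A n := by
  unfold partialDensity; positivity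

lemma partialDensity_eq_count (A : Set ℕ) [DecidablePred (· ∈ A)] (n : ℕ) :
    partialDensity A n = Nat.count (· ∈ A) n / n := by
  rw [partialDensity, Nat.count_eq_card_filter_range]
  congr!

lemma partialDensity_le_one (A : Set ℕ) (n : ℕ) : partialDensity A n ≤ 1 := by
  rw [partialDensity_eq_count]
  exact div_le_one_of_le₀ (by exact_mod_cast Nat.count_le _) n.cast_nonneg

lemma isBoundedUnder_ge_partialDensity (A : Set ℕ) :
    IsBoundedUnder (· ≥ ·) atTop (partialDensity A) :=
  isBoundedUnder_of ⟨0, partialDensity_nonneg A⟩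

lemma isCoboundedUnder_ge_partialDensity (A : Set ℕ) :
    IsCoboundedUnder (· ≥ ·) atTop (partialDensity A) :=
  (isBoundedUnder_of ⟨1, partialDensity_le_one A⟩).isCoboundedUnder_ge

lemma le_lowerDensity_of_forall_le {A : Set ℕ} {c : ℝ} (N : ℕ)
    (h : ∀ n ≥ N, c ≤ partialDensity A n) : c ≤ lowerDensity A :=
  le_liminf_of_le (isCoboundedUnder_ge_partialDensity A) (eventually_atTop.2 ⟨N, h⟩)

lemma lowerDensity_nonneg (A : Set ℕ) : 0 ≤ lowerDensity A :=
  le_lowerDensity_of_forall_le 0 fun n _ => partialDensity_nonneg A n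

lemma lowerDensity_le_one (A : Set ℕ) : lowerDensity A ≤ 1 :=
  liminf_le_of_le (isBoundedUnder_ge_partialDensity A) fun _ hb =>
    let ⟨n, hn⟩ := hb.exists
    hn.trans (partialDensity_le_one A n)

lemma lowerDensity_mono {A B : Set ℕ} (h : A ⊆ B) : lowerDensity A ≤ lowerDensity B := by
  refine liminf_le_liminf (Eventually.of_forall fun n => ?_)
    (isBoundedUnder_ge_partialDensity A) (isCoboundedUnder_ge_partialDensity B)
  simp only [partialDensity_eq_count]
  gcongr

lemma exists_forall_lt_partialDensity {A : Set ℕ} {c : ℝ} (h : c < lowerDensity A) :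
    ∃ N, ∀ n ≥ N, c < partialDensity A n :=
  eventually_atTop.1 (eventually_lt_of_lt_liminf h (isBoundedUnder_ge_partialDensity A))

structure IsPrimrecEnumeration (E : ℕ → ℕ → Bool) (D : Set ℕ) : Prop where
  primrec : Primrec₂ E
  monotone : ∀ k, Monotone (E · k)
  mem_iff : ∀ k, k ∈ D ↔ ∃ s, E s k

open Nat.Partrec Code in
lemma REPred.exists_isPrimrecEnumeration {D : Set ℕ} (hD : REPred (· ∈ D)) :
    ∃ E, IsPrimrecEnumeration E D := by
  obtain ⟨c, hc⟩ :=
    exists_code.1 (Partrec.nat_iff.1 (hD.map (Computable.encode.comp Computable.snd).to₂))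
  refine ⟨fun s k => (evaln s c k).isSome, ⟨?_, fun k s t hst => ?_, fun k => ?_⟩⟩
  · exact Primrec.option_isSome.comp
      (primrec_evaln.comp ((Primrec.fst.pair (Primrec.const c)).pair Primrec.snd))
  · simp only [Bool.le_iff_imp, Option.isSome_iff_exists]
    exact fun ⟨x, hx⟩ => ⟨x, evaln_mono hst hx⟩
  · have : k ∈ D ↔ (eval c k).Dom := by simp [hc, Part.assert]
    simp only [this, Part.dom_iff_mem, evaln_complete, Option.isSome_iff_exists]
    exact ⟨fun ⟨x, s, h⟩ => ⟨s, x, h⟩, fun ⟨s, x, h⟩ => ⟨x, s, h⟩⟩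

open Finset in
theorem Nat.count_le_add_count {p q : ℕ → Prop} [DecidablePred p] [DecidablePred q] {n j : ℕ}
    (h : ∀ k < n, j ≤ k → p k → q k) : Nat.count p n ≤ j + Nat.count q n := by
  simp only [Nat.count_eq_card_filter_range]
  calc #{k ∈ Finset.range n | p k}
      ≤ #(Finset.range j ∪ {k ∈ Finset.range n | q k}) := by
        refine Finset.card_le_card fun k hk => ?_
        simp only [Finset.mem_filter, Finset.mem_range, Finset.mem_union] at hk ⊢
        by_cases hjk : k < j
        · exact .inl hjk
        · exact .inr ⟨hk.1, h k hk.1 (not_lt.1 hjk) hk.2⟩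
    _ ≤ j + #{k ∈ Finset.range n | q k} := (Finset.card_union_le _ _).trans_eq (by simp)

namespace IsPrimrecEnumeration

variable {E : ℕ → ℕ → Bool} {D : Set ℕ} (hE : IsPrimrecEnumeration E D)
include hE

lemma mem_of_apply {s k : ℕ} (h : E s k) : k ∈ D :=
  (hE.mem_iff k).2 ⟨s, h⟩

lemma apply_of_le {s t k : ℕ} (hst : s ≤ t) (h : E s k) : E t k :=
  Bool.le_iff_imp.1 (hE.monotone k hst) h

lemma exists_stage_forall_lt (m : ℕ) : ∃ s, ∀ k < m, k ∈ D → E s k := by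
  induction m with
  | zero => exact ⟨0, by omega⟩
  | succ m ih =>
    obtain ⟨s, hs⟩ := ih
    by_cases hm : m ∈ D
    · obtain ⟨t, ht⟩ := (hE.mem_iff m).1 hm
      refine ⟨max s t, fun k hk hkD => ?_⟩
      rcases Nat.lt_succ_iff_lt_or_eq.1 hk with hk | rfl
      · exact hE.apply_of_le (le_max_left s t) (hs k hk hkD)
      · exact hE.apply_of_le (le_max_right s t) ht
    · refine ⟨s, fun k hk hkD => ?_⟩
      rcases Nat.lt_succ_iff_lt_or_eq.1 hk with hk | rfl
      · exact hs k hk hkD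
      · exact absurd hkD hm

lemma exists_stage_count {t : ℕ → ℕ} (ht : Primrec t)
    (htD : ∀ m, t m ≤ Nat.count (· ∈ D) m) :
    ∃ u : ℕ → ℕ, Computable u ∧ Monotone u ∧ ∀ n, t n ≤ Nat.count (E (u n) ·) n := by
  let Good (m s : ℕ) : Prop := ∀ m' < m + 1, t m' ≤ Nat.count (E s ·) m'
  have hGood : ∀ m, ∃ s, Good m s := fun m =>
    let ⟨s, hs⟩ := hE.exists_stage_forall_lt (m + 1)
    ⟨s, fun m' hm' => (htD m').trans (Nat.count_mono_left fun k hk => hs k (by omega))⟩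
  have hfilter : Primrec₂ fun (l : List ℕ) s => l.filter (E s ·) :=
    have hR : PrimrecRel fun k s => E s k = true :=
      Primrec.primrecPred ((hE.primrec.comp Primrec.snd Primrec.fst).of_eq fun _ => by simp)
    hR.listFilter.of_eq fun _ _ => by simp
  have hcount : Primrec₂ fun s m => Nat.count (E s ·) m :=
    (Primrec.list_length.comp
      (hfilter.comp (Primrec.list_range.comp Primrec.snd) Primrec.fst)).of_eq fun _ => by simp [Nat.count, List.countP_eq_length_filter]
  have hbound : PrimrecRel fun m' s => t m' ≤ Nat.count (E s ·) m' :=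
    Primrec.nat_le.comp (ht.comp Primrec.fst) (hcount.comp Primrec.snd Primrec.fst)
  have hGood_comp : ComputablePred fun p : ℕ × ℕ => Good p.1 p.2 :=
    (hbound.forall_lt.comp (Primrec.succ.comp Primrec.fst) Primrec.snd).computablePred
  refine ⟨fun m => Nat.find (hGood m), Computable.find hGood_comp hGood,
    fun m n hmn => Nat.find_mono fun s hs m' hm' => hs m' (by omega),
    fun n => Nat.find_spec (hGood n) n n.lt_succ_self⟩

lemma exists_computable_subset {t : ℕ → ℕ} (ht : Primrec t)
    (htD : ∀ m, t m ≤ Nat.count (· ∈ D) m) {K : ℕ} (hK : 0 < K) :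
    ∃ S ⊆ D, IsComputableSet S ∧ ∀ n, t n ≤ n / K + Nat.count (· ∈ S) n := by
  obtain ⟨u, hu, hu_mono, htu⟩ := hE.exists_stage_count ht htD
  -- delaying `k` to the stage `u (K * (k + 1))` keeps `S` decidable and loses only `k < n / K`
  let f (k : ℕ) : Bool := E (u (K * (k + 1))) k
  have hf : Computable f :=
    hE.primrec.to_comp.comp (hu.comp (Primrec.nat_mul.comp (Primrec.const K) Primrec.succ).to_comp)
      Computable.id
  refine ⟨{k | f k}, fun k hk => hE.mem_of_apply hk,
    ComputablePred.computable_iff.2 ⟨f, hf, rfl⟩,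
    fun n => (htu n).trans ?_⟩
  convert Nat.count_le_add_count fun k _ (hnk : n / K ≤ k) (hk : E (u n) k) => ?_
  have hnK : n ≤ K * (k + 1) := by
    rw [mul_comm]
    exact ((Nat.div_lt_iff_lt_mul hK).1 (Nat.lt_succ_of_le hnk)).le
  exact hE.apply_of_le (hu_mono hnK) hk

end IsPrimrecEnumeration

lemma exists_nat_lt_le_add_one {x : ℝ} (hx : 0 < x) : ∃ a : ℕ, (a : ℝ) < x ∧ x ≤ a + 1 := by
  have hceil : 1 ≤ ⌈x⌉₊ := Nat.one_le_iff_ne_zero.2 (Nat.ceil_pos.2 hx).ne'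
  refine ⟨⌈x⌉₊ - 1, ?_, ?_⟩ <;> rw [Nat.cast_sub hceil, Nat.cast_one]
  · linarith [Nat.ceil_lt_add_one hx.le]
  · linarith [Nat.le_ceil x]

lemma div_le_count_of_div_lt_partialDensity {D : Set ℕ} {a K m : ℕ} (hK : 0 < K)
    (h : (a : ℝ) / K < partialDensity D m) : a * m / K ≤ Nat.count (· ∈ D) m := by
  refine Nat.div_le_of_le_mul ?_
  rcases m.eq_zero_or_pos with rfl | hm
  · simp
  rw [partialDensity_eq_count, div_lt_div_iff₀ (Nat.cast_pos.2 hK) (Nat.cast_pos.2 hm)] at h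
  rw [mul_comm K]
  exact_mod_cast h.le

lemma mul_lt_two_mul_add_of_div_le {a n K c : ℕ} (hK : 0 < K) (hKn : K ≤ n)
    (h : a * n / K ≤ n / K + c) : a * n < 2 * n + K * c :=
  calc a * n < K * (a * n / K + 1) := Nat.lt_mul_div_succ _ hK
    _ ≤ K * (n / K + c + 1) := by gcongr
    _ = K * (n / K) + K * c + K := by ring
    _ ≤ n + K * c + n := by gcongr; exact Nat.mul_div_le n K
    _ = 2 * n + K * c := by ring

theorem REPred.exists_computable_subset_lowerDensity {D : Set ℕ} (hD : REPred (· ∈ D))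
    {ε : ℝ} (hε : 0 < ε) : ∃ S ⊆ D, IsComputableSet S ∧ lowerDensity D - ε ≤ lowerDensity S := by
  set ρ := lowerDensity D
  rcases le_or_gt ρ ε with hρε | hερ
  · refine ⟨∅, Set.empty_subset D, ComputablePred.computable_iff.2
      ⟨fun _ => false, Computable.const false, by ext; simp⟩, ?_⟩
    linarith [lowerDensity_nonneg ∅]
  obtain ⟨E, hE⟩ := hD.exists_isPrimrecEnumeration
  -- the threshold density is `a / K`, with `K ≥ 3 / ε` and `ρ K - 1 ≤ a < ρ K`
  set K := ⌈3 / ε⌉₊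
  have hK : 0 < K := Nat.ceil_pos.2 (by positivity)
  have hKR : (0 : ℝ) < K := Nat.cast_pos.2 hK
  have hKε : 3 ≤ K * ε := (div_le_iff₀ hε).1 (Nat.le_ceil _)
  obtain ⟨a, haρ, hρa⟩ := exists_nat_lt_le_add_one (mul_pos (hε.trans hερ) hKR)
  obtain ⟨N, hN⟩ := exists_forall_lt_partialDensity ((div_lt_iff₀ hKR).2 haρ)
  let t (m : ℕ) : ℕ := if N ≤ m then a * m / K else 0
  have ht : Primrec t := Primrec.ite (Primrec.nat_le.comp (Primrec.const N) Primrec.id)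
    (Primrec.nat_div.comp (Primrec.nat_mul.comp (Primrec.const a) Primrec.id) (Primrec.const K))
    (Primrec.const 0)
  have htD (m : ℕ) : t m ≤ Nat.count (· ∈ D) m := by
    by_cases hm : N ≤ m
    · simpa only [t, if_pos hm] using div_le_count_of_div_lt_partialDensity hK (hN m hm)
    · simp [t, hm]
  obtain ⟨S, hSD, hS, hcount⟩ := hE.exists_computable_subset ht htD hK
  refine ⟨S, hSD, hS, le_lowerDensity_of_forall_le (max N K) fun n hn => ?_⟩
  have hNn : N ≤ n := le_of_max_le_left hn
  have hKn : K ≤ n := le_of_max_le_right hn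
  have hnat : a * n < 2 * n + K * Nat.count (· ∈ S) n := by
    refine mul_lt_two_mul_add_of_div_le hK hKn ?_
    simpa only [t, if_pos hNn] using hcount n
  have hnatR : ((a : ℝ) - 2) * n ≤ K * Nat.count (· ∈ S) n := by
    have : (a : ℝ) * n < 2 * n + K * Nat.count (· ∈ S) n := by exact_mod_cast hnat
    linarith
  rw [partialDensity_eq_count, le_div_iff₀ (Nat.cast_pos.2 (hK.trans_le hKn)),
    ← mul_le_mul_iff_of_pos_left hKR]
  calc K * ((ρ - ε) * n) = (ρ * K - K * ε) * n := by ring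
    _ ≤ (a + 1 - 3) * n := by gcongr
    _ ≤ K * Nat.count (· ∈ S) n := by linarith

lemma Partrec.exists_computable_of_subset_dom {α σ : Type*} [Primcodable α] [Primcodable σ]
    [Inhabited σ] {φ : α →. σ} (hφ : Partrec φ) {S : Set α} (hS : ComputablePred (· ∈ S))
    (hSφ : S ⊆ φ.Dom) : ∃ f : α → σ, Computable f ∧ ∀ x ∈ S, f x ∈ φ x := by
  obtain ⟨_, hS⟩ := hS
  refine ⟨fun x => if hx : x ∈ S then (φ x).get (hSφ hx) else default,
    (Partrec.cond hS hφ (Partrec.const' (Part.some default))).of_eq_tot fun x => ?_,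
    fun x hx => by simpa [hx] using Part.get_mem _⟩
  by_cases hx : x ∈ S
  · simpa [hx] using Part.get_mem _
  · simp [hx]

lemma partiallyComputableAt_zero (A : Set ℕ) : PartiallyComputableAt A 0 :=
  ⟨fun _ => Part.none, Partrec.none, fun _ _ hb => absurd hb (Part.notMem_none _),
    lowerDensity_nonneg _⟩

lemma PartiallyComputableAt.le_one {A : Set ℕ} {r : ℝ} (h : PartiallyComputableAt A r) : r ≤ 1 :=
  let ⟨_, _, _, hr⟩ := h
  hr.trans (lowerDensity_le_one _)

lemma CoarselyComputableAt.le_one {A : Set ℕ} {r : ℝ} (h : CoarselyComputableAt A r) : r ≤ 1 :=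
  let ⟨_, _, hr⟩ := h
  hr.trans (lowerDensity_le_one _)

lemma PartiallyComputableAt.coarselyComputableAt_sub {A : Set ℕ} {r : ℝ}
    (h : PartiallyComputableAt A r) {ε : ℝ} (hε : 0 < ε) : CoarselyComputableAt A (r - ε) := by
  obtain ⟨φ, hφ, hφA, hr⟩ := h
  obtain ⟨S, hSφ, hS, hSdens⟩ :=
    REPred.exists_computable_subset_lowerDensity (D := φ.Dom) hφ.dom_re hε
  obtain ⟨f, hf, hfφ⟩ := hφ.exists_computable_of_subset_dom hS hSφ
  refine ⟨{n | f n}, ComputablePred.computable_iff.2 ⟨f, hf, rfl⟩, ?_⟩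
  have hSagree : S ⊆ {n | n ∈ A ↔ n ∈ {n | f n}} := fun n hn => (hφA n (f n) (hfφ n hn)).symm
  linarith [lowerDensity_mono hSagree]

theorem alphaBound_le_gammaBound (A : Set ℕ) :
    alphaBound A ≤ gammaBound A ∧ (GenericallyComputable A → gammaBound A = 1) := by
  have hbdd : BddAbove {r | CoarselyComputableAt A r} := ⟨1, fun _ => CoarselyComputableAt.le_one⟩
  have hαγ : alphaBound A ≤ gammaBound A :=
    csSup_le ⟨0, partiallyComputableAt_zero A⟩ fun r hr => le_of_forall_pos_le_add fun ε hε =>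
      sub_le_iff_le_add.1 (le_csSup hbdd (hr.coarselyComputableAt_sub hε))
  refine ⟨hαγ, fun hgen => le_antisymm ?_ ?_⟩
  · exact Real.sSup_le (fun _ => CoarselyComputableAt.le_one) zero_le_one
  · exact (le_csSup ⟨1, fun _ => PartiallyComputableAt.le_one⟩ hgen).trans hαγ
end

section
/- Let I_n = [n!, (n+1)!) and for A ⊆ ℕ let 𝓘(A) = ⋃_{n ∈ A} I_n. If A is noncomputable and C is a computable set such that ρ̲({n : 𝓘(A)(n) = C(n)}) > 1/2, then A is computable (contradiction); consequently γ(𝓘(A)) ≤ 1/2 for noncomputable A. -/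
open Filter Topology
open scoped symmDiff Classical

/-- 𝓘(A) = ⋃_{n ∈ A} [n!, (n+1)!). -/
def calI (A : Set ℕ) : Set ℕ := ⋃ n ∈ A, Set.Ico (Nat.factorial n) (Nat.factorial (n + 1))

/-! On the block `[n!, (n+1)!)` the set `𝓘(A)` is constant (full iff `n ∈ A`), and the block
fills all but a `1/(n+1)` fraction of `[0, (n+1)!)`. If the majority vote of `C` on the block got
`n ∈ A` wrong, `C` would agree with `𝓘(A)` on at most half of the block, so the agreement density
below `(n+1)!` would be at most `(1 + 1/(n+1))/2`. Lower agreement density above `1/2` therefore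
makes the vote, which is computable from `C`, correct for all large `n`. -/

open Finset Nat

theorem Primrec.nat_factorial : Primrec Nat.factorial := by
  have h : Primrec (fun n => Nat.rec 1 (fun k ih => (k + 1) * ih) n : ℕ → ℕ) :=
    Primrec.nat_rec₁ 1 (Primrec.nat_mul.comp (Primrec.succ.comp Primrec.fst) Primrec.snd)
  refine h.of_eq fun n => ?_
  induction n with
  | zero => rfl
  | succ n ih => simp [Nat.factorial, ih]

theorem ComputablePred.computable_count {p : ℕ → Prop} [DecidablePred p]
    (hp : ComputablePred p) : Computable (Nat.count p) := by
  have hstep : Computable₂ fun (_ : ℕ) (kc : ℕ × ℕ) => kc.2 + cond (decide (p kc.1)) 1 0 :=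
    Primrec.nat_add.to_comp.comp (Computable.snd.comp Computable.snd)
      (Computable.cond (hp.decide.comp (Computable.fst.comp Computable.snd))
        (Computable.const 1) (Computable.const 0))
  refine (Computable.nat_rec Computable.id (Computable.const 0) hstep).of_eq fun n => ?_
  induction n with
  | zero => rfl
  | succ n ih => simp only [Nat.count_succ, ← ih]; cases decide (p n) <;> simp_all

theorem ComputablePred.of_eventually_iff {p q : ℕ → Prop} (hp : ComputablePred p)
    (h : ∀ᶠ n in atTop, p n ↔ q n) : ComputablePred q := by
  obtain ⟨N, hN⟩ := eventually_atTop.mp h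
  let table : List Bool := (List.range N).map fun k => decide (q k)
  have hcomp : Computable fun n => table[n]?.getD (decide (p n)) :=
    Computable.option_getD (Computable.list_getElem?.comp (Computable.const _) Computable.id)
      hp.decide
  refine ComputablePred.computable_iff.mpr ⟨_, hcomp, funext fun n => propext ?_⟩
  rcases lt_or_ge n N with hn | hn
  · simp [table, hn]
  · have hnone : table[n]? = none := List.getElem?_eq_none (by simpa [table] using hn)
    simp [hnone, hN n hn]

theorem Nat.count_add_card_filter_Ico {p : ℕ → Prop} [DecidablePred p] {a b : ℕ} (h : a ≤ b) :
    count p a + #{k ∈ Ico a b | p k} = count p b := by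
  rw [count_eq_card_filter_range, count_eq_card_filter_range, range_eq_Ico, range_eq_Ico,
    ← Ico_union_Ico_eq_Ico (Nat.zero_le a) h, filter_union,
    card_union_of_disjoint (disjoint_filter_filter (Ico_disjoint_Ico_consecutive 0 a b))]

theorem two_mul_card_agree_le_of_not_iff_majority {α : Type*} {S C : Set α} {I : Finset α}
    {b : Prop} (hS : ∀ k ∈ I, k ∈ S ↔ b) (hvote : ¬ (b ↔ #I < 2 * #{k ∈ I | k ∈ C})) :
    2 * #{k ∈ I | k ∈ S ↔ k ∈ C} ≤ #I := by
  have hsplit := card_filter_add_card_filter_not (s := I) (p := (· ∈ C))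
  by_cases hb : b
  · have hagree : {k ∈ I | k ∈ S ↔ k ∈ C} = {k ∈ I | k ∈ C} :=
      filter_congr fun k hk => by simp [(hS k hk).mpr hb]
    rw [hagree]
    exact not_lt.mp fun h => hvote (iff_of_true hb h)
  · have hagree : {k ∈ I | k ∈ S ↔ k ∈ C} = {k ∈ I | k ∉ C} :=
      filter_congr fun k hk => by simp [(hS k hk).not.mpr hb]
    rw [hagree]
    have := not_not.mp fun h => hvote (iff_of_false hb h)
    omega

theorem mem_calI_iff_of_mem_Ico {A : Set ℕ} {n k : ℕ} (hk : k ∈ Ico n ! (n + 1)!) :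
    k ∈ calI A ↔ n ∈ A := by
  rw [Finset.mem_Ico] at hk
  refine ⟨fun hkA => ?_, fun hn => Set.mem_biUnion hn ⟨hk.1, hk.2⟩⟩
  obtain ⟨m, hm, hkm_lo, hkm_hi⟩ := Set.mem_iUnion₂.mp hkA
  have hm_le : m ≤ n := not_lt.mp fun h => (factorial_le h).not_gt (hkm_lo.trans_lt hk.2)
  have hn_le : n ≤ m := not_lt.mp fun h => (factorial_le h).not_gt (hk.1.trans_lt hkm_hi)
  rwa [← le_antisymm hm_le hn_le]

def majorityVote (C : Set ℕ) (n : ℕ) : Prop :=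
  (n + 1)! - n ! < 2 * #{k ∈ Ico n ! (n + 1)! | k ∈ C}

theorem IsComputableSet.computablePred_majorityVote {C : Set ℕ} (hC : IsComputableSet C) :
    ComputablePred (majorityVote C) := by
  have hcount : Computable (count (· ∈ C)) := ComputablePred.computable_count hC
  have hfac : Computable Nat.factorial := Primrec.nat_factorial.to_comp
  have hfac_succ : Computable fun n => (n + 1)! := hfac.comp Computable.succ
  have hvote : Computable fun n =>
      decide ((n + 1)! - n ! < 2 * (count (· ∈ C) (n + 1)! - count (· ∈ C) n !)) :=
    Primrec.nat_lt.decide.to_comp.comp (Primrec.nat_sub.to_comp.comp hfac_succ hfac)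
      (Primrec.nat_mul.to_comp.comp (Computable.const 2)
        (Primrec.nat_sub.to_comp.comp (hcount.comp hfac_succ) (hcount.comp hfac)))
  refine hvote.computablePred.of_eq fun n => ?_
  rw [majorityVote, ← count_add_card_filter_Ico (factorial_le (Nat.le_add_right n 1)),
    Nat.add_sub_cancel_left]

theorem partialDensity_setOf_eq_count (p : ℕ → Prop) [DecidablePred p] (m : ℕ) :
    partialDensity {k | p k} m = count p m / m := by
  rw [partialDensity, count_eq_card_filter_range]
  congr!

theorem eventually_lt_partialDensity {E : Set ℕ} {r : ℝ} (h : r < lowerDensity E) :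
    ∀ᶠ n in atTop, r < partialDensity E n :=
  eventually_lt_of_lt_liminf h <|
    isBoundedUnder_of ⟨0, fun n => by unfold partialDensity; positivity⟩

theorem two_mul_count_agree_le_of_not_iff_majorityVote {A C : Set ℕ} {n : ℕ}
    (hvote : ¬ (n ∈ A ↔ majorityVote C n)) :
    2 * count (fun k => k ∈ calI A ↔ k ∈ C) (n + 1)! ≤ (n + 1)! + n ! := by
  have hblock := two_mul_card_agree_le_of_not_iff_majority (S := calI A) (C := C)
    (fun k hk => mem_calI_iff_of_mem_Ico hk) (by rwa [card_Ico])
  rw [card_Ico] at hblock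
  have hsplit := count_add_card_filter_Ico (p := fun k => k ∈ calI A ↔ k ∈ C)
    (factorial_le (Nat.le_add_right n 1))
  have hprefix : count (fun k => k ∈ calI A ↔ k ∈ C) n ! ≤ n ! := count_le _
  have hfac_mono := factorial_le (Nat.le_add_right n 1)
  omega

theorem partialDensity_factorial_le_of_not_iff_majorityVote {A C : Set ℕ} {n : ℕ}
    (hvote : ¬ (n ∈ A ↔ majorityVote C n)) :
    partialDensity {k | k ∈ calI A ↔ k ∈ C} (n + 1)! ≤ (1 + 1 / ((n : ℝ) + 1)) / 2 := by
  have hcount : 2 * (count (fun k => k ∈ calI A ↔ k ∈ C) (n + 1)! : ℝ) ≤ (n + 1)! + n ! := by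
    exact_mod_cast two_mul_count_agree_le_of_not_iff_majorityVote hvote
  have hfac : ((n + 1)! : ℝ) = (n + 1) * n ! := by push_cast [factorial_succ]; ring
  have hpos : (0 : ℝ) < n ! := by positivity
  rw [partialDensity_setOf_eq_count, div_le_iff₀ (by positivity)]
  rw [hfac] at hcount ⊢
  field_simp
  linarith

theorem eventually_mem_iff_majorityVote {A C : Set ℕ}
    (h : 1 / 2 < lowerDensity {k | k ∈ calI A ↔ k ∈ C}) :
    ∀ᶠ n in atTop, n ∈ A ↔ majorityVote C n := by
  obtain ⟨a, hhalf_a, ha⟩ := exists_between h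
  have hdense : ∀ᶠ n in atTop, a < partialDensity {k | k ∈ calI A ↔ k ∈ C} (n + 1)! :=
    (factorial_tendsto_atTop.comp (tendsto_add_atTop_nat 1)).eventually
      (eventually_lt_partialDensity ha)
  have hbound : Tendsto (fun n : ℕ => (1 + 1 / ((n : ℝ) + 1)) / 2) atTop (𝓝 (1 / 2)) := by
    simpa using ((tendsto_one_div_add_atTop_nhds_zero_nat (𝕜 := ℝ)).const_add 1).div_const 2
  filter_upwards [hdense, hbound.eventually (gt_mem_nhds hhalf_a)] with n hn hn_bound
  by_contra hvote
  linarith [partialDensity_factorial_le_of_not_iff_majorityVote hvote]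

theorem IsComputableSet.of_half_lt_lowerDensity_calI {A C : Set ℕ} (hC : IsComputableSet C)
    (h : 1 / 2 < lowerDensity {k | k ∈ calI A ↔ k ∈ C}) : IsComputableSet A :=
  hC.computablePred_majorityVote.of_eventually_iff <|
    (eventually_mem_iff_majorityVote h).mono fun _ hn => hn.symm

theorem majority_vote_calI (A : Set ℕ) :
    (∀ C : Set ℕ, IsComputableSet C →
      1 / 2 < lowerDensity {n | n ∈ calI A ↔ n ∈ C} → IsComputableSet A) ∧
    (¬ IsComputableSet A → gammaBound (calI A) ≤ 1 / 2) := by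
  refine ⟨fun C hC h => hC.of_half_lt_lowerDensity_calI h, fun hA => ?_⟩
  refine Real.sSup_le (fun r ⟨C, hC, hr⟩ => ?_) (by norm_num)
  exact not_lt.mp fun hr_half => hA (hC.of_half_lt_lowerDensity_calI (hr_half.trans_le hr))
end
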